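/- arXiv:1304.3986 — 2 statements merged into one kernel-verified Lean document; each statement's English description precedes it below -/
import Mathlib

section
/- The abelian group Ext^1(ℚ, ℤ) is divisible and torsion-free, i.e., it naturally carries the structure of a ℚ-vector space. -/
/-!
Multiplication by a nonzero integer `n` is an automorphism of `ℚ`. Since `Ext¹(-, ℤ)` is an
additive functor, it sends this automorphism to multiplication by `n` on `Ext¹(ℚ, ℤ)`, which is
therefore bijective. An abelian group on which every nonzero integer acts bijectively is its own
localization at `ℤ ∖ {0}`, hence a `ℚ`-module.
-/

open CategoryTheory

/-- `Ext¹(A, B)` in the category of abelian groups, realized as ℤ-modules. -/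
noncomputable abbrev Ext1 (A B : Type) [AddCommGroup A] [AddCommGroup B] : ModuleCat ℤ :=
  ((Ext ℤ (ModuleCat ℤ) 1).obj (Opposite.op (ModuleCat.of ℤ A))).obj (ModuleCat.of ℤ B)

instance projectiveResolutions_additive (C : Type*) [Category C] [Abelian C]
    [HasProjectiveResolutions C] : (projectiveResolutions C).Additive where
  map_add {X Y f g} :=
    (HomotopyCategory.eq_of_homotopy _ _ <|
      ProjectiveResolution.liftHomotopy (f + g) _ _ (by simp) (by simp)).trans (Functor.map_add _)

instance Functor.leftDerived_additive {C D : Type*} [Category C] [Category D] [Abelian C]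
    [Abelian D] [HasProjectiveResolutions C] (F : C ⥤ D) [F.Additive] (n : ℕ) :
    (F.leftDerived n).Additive := by
  dsimp only [Functor.leftDerived, Functor.leftDerivedToHomotopyCategory]
  infer_instance

section Ext

variable {R : Type*} [Ring R] {C : Type*} [Category C] [Abelian C] [Linear R C]
  [EnoughProjectives C]

lemma Ext_map_zsmul (n : ℕ) {X X' : C} (f : X ⟶ X') (m : ℤ) (Y : C) :
    ((Ext R C n).map (m • f).op).app Y = m • ((Ext R C n).map f.op).app Y :=
  Functor.map_zsmul (((linearYoneda R C).obj Y).rightOp.leftDerived n).leftOp (f := f.op)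

lemma isIso_zsmul_id_Ext {X : C} (m : ℤ) [IsIso (m • 𝟙 X)] (n : ℕ) (Y : C) :
    IsIso (m • 𝟙 (((Ext R C n).obj (Opposite.op X)).obj Y)) := by
  have h : ((Ext R C n).map (m • 𝟙 X).op).app Y = m • 𝟙 _ := by
    rw [Ext_map_zsmul, op_id, CategoryTheory.Functor.map_id, NatTrans.id_app]
  rw [← h]
  infer_instance

end Ext

lemma ModuleCat.isIso_zsmul_id_iff {M : ModuleCat ℤ} (m : ℤ) :
    IsIso (m • 𝟙 M) ↔ Function.Bijective (fun x : M => m • x) := by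
  rw [ConcreteCategory.isIso_iff_bijective]
  rfl

lemma ModuleCat.isIso_zsmul_id_of_module_rat (V : Type*) [AddCommGroup V] [Module ℚ V] {m : ℤ}
    (hm : m ≠ 0) : IsIso (m • 𝟙 (ModuleCat.of ℤ V)) := by
  rw [ModuleCat.isIso_zsmul_id_iff]
  simpa only [Int.cast_smul_eq_zsmul] using
    IsUnit.smul_bijective (β := V) (Int.cast_ne_zero.2 hm : (m : ℚ) ≠ 0).isUnit

lemma isLocalizedModule_id_of_bijective {R M : Type*} [CommSemiring R] [AddCommMonoid M]
    [Module R M] (S : Submonoid R) (h : ∀ s ∈ S, Function.Bijective (fun x : M => s • x)) :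
    IsLocalizedModule S (LinearMap.id : M →ₗ[R] M) where
  map_units s := (Module.End.isUnit_iff _).2 (h s s.2)
  surj m := ⟨(m, 1), one_smul _ _⟩
  exists_of_eq h := ⟨1, congr_arg _ h⟩

lemma nonempty_module_rat_of_bijective_zsmul {M : Type*} [AddCommGroup M]
    (h : ∀ n : ℤ, n ≠ 0 → Function.Bijective (fun x : M => n • x)) : Nonempty (Module ℚ M) :=
  have := isLocalizedModule_id_of_bijective (R := ℤ) (M := M) (nonZeroDivisors ℤ) fun n hn =>
    h n (nonZeroDivisors.ne_zero hn)
  ⟨IsLocalizedModule.module (nonZeroDivisors ℤ) (A := ℚ) LinearMap.id⟩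

/-- `Ext¹(ℚ, ℤ)` is divisible and torsion-free, i.e. it carries a ℚ-vector space
structure (compatible with its addition). -/
theorem ext1_rat_int_divisible_torsionFree :
    (∀ (x : Ext1 ℚ ℤ) (n : ℤ), n ≠ 0 → ∃ y : Ext1 ℚ ℤ, n • y = x) ∧
    (∀ (x : Ext1 ℚ ℤ) (n : ℤ), n ≠ 0 → n • x = 0 → x = 0) ∧
    Nonempty (Module ℚ (Ext1 ℚ ℤ)) := by
  have hbij (n : ℤ) (hn : n ≠ 0) : Function.Bijective (fun x : Ext1 ℚ ℤ => n • x) := by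
    have := ModuleCat.isIso_zsmul_id_of_module_rat ℚ hn
    exact (ModuleCat.isIso_zsmul_id_iff n).1 (isIso_zsmul_id_Ext n 1 _)
  exact ⟨fun x n hn => (hbij n hn).surjective x,
    fun x n hn hx => (hbij n hn).injective (hx.trans (zsmul_zero n).symm),
    nonempty_module_rat_of_bijective_zsmul hbij⟩
end

section
/- Let G be a torsion abelian group and H ⊆ G a basic subgroup (H is a direct sum of cyclic groups, G/H is divisible, and nH = H ∩ nG for every integer n). Then the natural map Λ²(H) → Λ²(G) on second exterior powers over ℤ is surjective. -/
open DirectSum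


/-- The linear map `Λⁿ(M) → Λⁿ(N)` induced by a linear map `f : M → N`. -/
noncomputable def exteriorPowerMap {R M N : Type*} [CommRing R]
    [AddCommGroup M] [AddCommGroup N] [Module R M] [Module R N]
    (n : ℕ) (f : M →ₗ[R] N) : ⋀[R]^n M →ₗ[R] ⋀[R]^n N :=
  (ExteriorAlgebra.map f).toLinearMap.restrict (p := ⋀[R]^n M) (q := ⋀[R]^n N)
    (by
      intro x hx
      rw [← ExteriorAlgebra.ιMulti_span_fixedDegree] at hx ⊢
      induction hx using Submodule.span_induction with
      | mem a ha =>
        obtain ⟨m, rfl⟩ := ha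
        exact Submodule.subset_span ⟨f ∘ m, (ExteriorAlgebra.map_apply_ιMulti f m).symm⟩
      | zero => simp
      | add a b _ _ ha hb => rw [map_add]; exact Submodule.add_mem _ ha hb
      | smul r a _ ha => rw [map_smul]; exact Submodule.smul_mem _ r ha)

private lemma ι_mul_mem {R M : Type*} [CommRing R] [AddCommGroup M] [Module R M] (x y : M) :
    ExteriorAlgebra.ι R x * ExteriorAlgebra.ι R y ∈ ⋀[R]^2 M := by
  rw [ExteriorAlgebra.exteriorPower, pow_two]
  exact Submodule.mul_mem_mul (LinearMap.mem_range_self _ x) (LinearMap.mem_range_self _ y)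

/-- key step: replace a factor of a wedge using divisibility of `G/H` and torsion. -/
private lemma wedge_lift (G : Type) [AddCommGroup G]
    (htor : AddMonoid.IsTorsion G) (H : AddSubgroup G)
    (hdiv : ∀ (x : G ⧸ H) (n : ℤ), n ≠ 0 → ∃ y : G ⧸ H, n • y = x)
    (g g' : G) :
    ∃ h h' : H, ExteriorAlgebra.ι ℤ g * ExteriorAlgebra.ι ℤ g'
      = ExteriorAlgebra.ι ℤ (h : G) * ExteriorAlgebra.ι ℤ (h' : G) := by
  -- first slot
  obtain ⟨n, hn0, hng'⟩ := (isOfFinAddOrder_iff_nsmul_eq_zero).1 (htor g')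
  obtain ⟨y, hy⟩ := hdiv (QuotientAddGroup.mk g) (n : ℤ) (by exact_mod_cast hn0.ne')
  obtain ⟨a, rfl⟩ := QuotientAddGroup.mk_surjective y
  have hmem : g - (n : ℤ) • a ∈ H := by
    rw [← QuotientAddGroup.eq_zero_iff]
    have : (QuotientAddGroup.mk (g - (n : ℤ) • a) : G ⧸ H)
        = QuotientAddGroup.mk g - (n : ℤ) • QuotientAddGroup.mk a := by
      simp [QuotientAddGroup.mk_sub]
    rw [this, hy.symm]; abel
  set h : H := ⟨g - (n : ℤ) • a, hmem⟩ with hh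
  have hsplit : g = (h : G) + (n : ℤ) • a := by simp [hh]
  have step1 : ExteriorAlgebra.ι ℤ g * ExteriorAlgebra.ι ℤ g'
      = ExteriorAlgebra.ι ℤ (h : G) * ExteriorAlgebra.ι ℤ g' := by
    rw [hsplit, map_add, add_mul, map_smul, smul_mul_assoc,
      ← mul_smul_comm, ← map_smul]
    have : (n : ℤ) • g' = 0 := by exact_mod_cast hng'
    rw [this, map_zero, mul_zero, add_zero]
  -- second slot
  obtain ⟨m, hm0, hmh⟩ := (isOfFinAddOrder_iff_nsmul_eq_zero).1 (htor (h : G))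
  obtain ⟨z, hz⟩ := hdiv (QuotientAddGroup.mk g') (m : ℤ) (by exact_mod_cast hm0.ne')
  obtain ⟨b, rfl⟩ := QuotientAddGroup.mk_surjective z
  have hmem' : g' - (m : ℤ) • b ∈ H := by
    rw [← QuotientAddGroup.eq_zero_iff]
    have : (QuotientAddGroup.mk (g' - (m : ℤ) • b) : G ⧸ H)
        = QuotientAddGroup.mk g' - (m : ℤ) • QuotientAddGroup.mk b := by
      simp [QuotientAddGroup.mk_sub]
    rw [this, hz.symm]; abel
  refine ⟨h, ⟨g' - (m : ℤ) • b, hmem'⟩, ?_⟩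
  rw [step1]
  have hsplit' : g' = (g' - (m : ℤ) • b) + (m : ℤ) • b := by abel
  conv_lhs => rw [hsplit']
  rw [map_add, mul_add, map_smul, mul_smul_comm, ← smul_mul_assoc, ← map_smul]
  have : (m : ℤ) • (h : G) = 0 := by exact_mod_cast hmh
  rw [this, map_zero, zero_mul, add_zero]

/-- If `G` is a torsion abelian group and `H ⊆ G` a basic subgroup (a direct sum of cyclic
groups with `G/H` divisible and `nH = H ∩ nG` for all `n`), then the natural map
`Λ²(H) → Λ²(G)` is surjective. -/
theorem exteriorPower_two_map_surjective_of_basic (G : Type) [AddCommGroup G]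
    (htor : AddMonoid.IsTorsion G) (H : AddSubgroup G)
    (hcyc : ∃ (ι : Type) (c : ι → ℕ), Nonempty (H ≃+ ⨁ i : ι, ZMod (c i)))
    (hdiv : ∀ (x : G ⧸ H) (n : ℤ), n ≠ 0 → ∃ y : G ⧸ H, n • y = x)
    (hpure : ∀ (n : ℤ) (x : G), (∃ h ∈ H, n • h = x) ↔ (x ∈ H ∧ ∃ g : G, n • g = x)) :
    Function.Surjective (exteriorPowerMap 2 H.subtype.toIntLinearMap) := by
  set f := H.subtype.toIntLinearMap with hf
  have key : ∀ z (_ : z ∈ Submodule.span ℤ (Set.range (ExteriorAlgebra.ιMulti ℤ 2 (M := G)))),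
      ∃ y : ⋀[ℤ]^2 H, ((exteriorPowerMap 2 f y : ⋀[ℤ]^2 G) : ExteriorAlgebra ℤ G) = z := by
    intro z hz
    induction hz using Submodule.span_induction with
    | mem a ha =>
      obtain ⟨v, rfl⟩ := ha
      obtain ⟨h, h', hw⟩ := wedge_lift G htor H hdiv (v 0) (v 1)
      refine ⟨⟨ExteriorAlgebra.ι ℤ h * ExteriorAlgebra.ι ℤ h', ι_mul_mem h h'⟩, ?_⟩
      rw [exteriorPowerMap, LinearMap.restrict_coe_apply]
      have : ExteriorAlgebra.ιMulti ℤ 2 v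
          = ExteriorAlgebra.ι ℤ (v 0) * ExteriorAlgebra.ι ℤ (v 1) := by
        simp [ExteriorAlgebra.ιMulti_apply, List.ofFn_succ, Matrix.vecTail, Fin.succ_zero_eq_one]
      rw [this, hw]
      simp [hf]
    | zero => exact ⟨0, by simp⟩
    | add a b _ _ ha hb =>
      obtain ⟨y1, hy1⟩ := ha
      obtain ⟨y2, hy2⟩ := hb
      exact ⟨y1 + y2, by simp [hy1, hy2]⟩
    | smul r a _ ha =>
      obtain ⟨y, hy⟩ := ha
      exact ⟨r • y, by simp [hy]⟩
  intro x
  obtain ⟨z, hz⟩ := x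
  rw [← ExteriorAlgebra.ιMulti_span_fixedDegree] at hz
  obtain ⟨y, hy⟩ := key z hz
  exact ⟨y, Subtype.ext hy⟩
end
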